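/- arXiv:1307.2834 — 7 statements merged into one kernel-verified Lean document; each statement's English description precedes it below -/
import Mathlib

section
/- Let s < 0 be a real number and let N > 2 be an integer. Then the second discrete derivative of the minimal average standardized Riesz pair-energy satisfies the two-sided bound: (2/((N+1)(N-2)))·(v_s(N) + 1/s) ≤ v_s(N-1) - 2·v_s(N) + v_s(N+1) ≤ -(2/((N+1)N))·(v_s(N) + 1/s). -/
open scoped BigOperators

/-- The standardized Riesz pair-energy `V_s(r) = (r^{-s} - 1)/s` for `s ≠ 0`,
and `V_0(r) = -log r`. -/
noncomputable def Vpair (s r : ℝ) : ℝ := if s = 0 then -Real.log r else (r ^ (-s) - 1) / s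

/-- The average standardized Riesz pair-energy of an `N`-point configuration on the
unit sphere `S² ⊂ ℝ³`. -/
noncomputable def avgE (s : ℝ) (N : ℕ) (q : Fin N → EuclideanSpace ℝ (Fin 3)) : ℝ :=
  2 / ((N : ℝ) * ((N : ℝ) - 1)) *
    ∑ i : Fin N, ∑ j : Fin N, if i < j then Vpair s ‖q i - q j‖ else 0

/-- The minimal average standardized Riesz pair-energy `v_s(N)`: the infimum of the
average pair-energy over all configurations of `N` pairwise distinct points on `S²`. -/
noncomputable def vmin (s : ℝ) (N : ℕ) : ℝ :=
  sInf { E : ℝ | ∃ q : Fin N → EuclideanSpace ℝ (Fin 3),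
    (∀ i, ‖q i‖ = 1) ∧ Function.Injective q ∧ E = avgE s N q }

/-!
Put `u(n) = v_s(n) + 1/s`; it is `2/(n(n-1))` times the least pair sum of the kernel
`r^{-s}/s`, which is continuous and vanishes at `0` because `s < 0`.

Each pair of an `(n+1)`-point configuration survives exactly `n - 1` of its `n + 1` one-point
deletions, so some deletion does not increase the average energy: `v_s` is nondecreasing.
Conversely, some point `q_k` of an `n`-point configuration interacts with the others by at most
`2/n` times the pair sum; a new point on the sphere placed close enough to `q_k` (the sphere has
no isolated points) then gives `n(n+1) u(n+1) ≤ (n+2)(n-1) u(n)`. The two-sided bound is a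
positive combination of these inequalities at `n = N - 1` and `n = N`.
-/

open Finset Metric Filter Topology

section DoubleSum

variable {n : ℕ}

theorem Fin.sum_sum_succAbove (F : Fin (n + 1) → Fin (n + 1) → ℝ) (k : Fin (n + 1)) :
    ∑ i : Fin n, ∑ j : Fin n, F (k.succAbove i) (k.succAbove j)
      = ∑ i, ∑ j, F i j - ∑ j, F k j - ∑ i, F i k + F k k := by
  have hrow : ∀ i, ∑ j : Fin n, F i (k.succAbove j) = ∑ j, F i j - F i k := fun i => by
    rw [Fin.sum_univ_succAbove (F i) k]; ring
  simp only [hrow, sum_sub_distrib]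
  rw [Fin.sum_univ_succAbove (fun i => ∑ j, F i j) k, Fin.sum_univ_succAbove (fun i => F i k) k]
  ring

theorem Fin.sum_sum_sum_succAbove (F : Fin (n + 1) → Fin (n + 1) → ℝ) :
    ∑ k : Fin (n + 1), ∑ i : Fin n, ∑ j : Fin n, F (k.succAbove i) (k.succAbove j)
      = (n - 1) * ∑ i, ∑ j, F i j + ∑ k, F k k := by
  simp only [Fin.sum_sum_succAbove, sum_add_distrib, sum_sub_distrib, sum_const, nsmul_eq_mul]
  rw [sum_comm (f := fun i k => F i k)]
  push_cast
  ring

end DoubleSum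

section PairSum

variable {E : Type*} [SeminormedAddCommGroup E] {n : ℕ}

noncomputable def pairSum (f : ℝ → ℝ) (q : Fin n → E) : ℝ :=
  ∑ i, ∑ j, if i < j then f ‖q i - q j‖ else 0

theorem sum_sum_eq_two_mul_pairSum_add (f : ℝ → ℝ) (q : Fin n → E) :
    ∑ i, ∑ j, f ‖q i - q j‖ = 2 * pairSum f q + n * f 0 := by
  have hsplit : ∀ i j, f ‖q i - q j‖ = (if i < j then f ‖q i - q j‖ else 0)
      + (if j < i then f ‖q j - q i‖ else 0) + (if i = j then f 0 else 0) := fun i j => by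
    rcases lt_trichotomy i j with h | rfl | h
    · simp [h, h.not_gt, h.ne]
    · simp
    · simp [h, h.not_gt, h.ne', norm_sub_rev]
  rw [sum_congr rfl fun i _ => sum_congr rfl fun j _ => hsplit i j]
  simp only [sum_add_distrib, sum_ite_eq, mem_univ, if_true, sum_const, card_univ,
    Fintype.card_fin, nsmul_eq_mul]
  rw [sum_comm (f := fun i j => if j < i then f ‖q j - q i‖ else 0)]
  unfold pairSum
  ring

theorem pairSum_const (c : ℝ) (q : Fin n → E) :
    pairSum (fun _ => c) q = n * (n - 1) / 2 * c := by
  have h := sum_sum_eq_two_mul_pairSum_add (fun _ => c) q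
  simp only [sum_const, card_univ, Fintype.card_fin, nsmul_eq_mul] at h
  linarith

theorem pairSum_sub (f g : ℝ → ℝ) (q : Fin n → E) :
    pairSum (fun r => f r - g r) q = pairSum f q - pairSum g q := by
  simp only [pairSum, ← sum_sub_distrib]
  refine sum_congr rfl fun i _ => sum_congr rfl fun j _ => ?_
  split_ifs <;> ring

theorem pairSum_mono {f g : ℝ → ℝ} (q : Fin n → E)
    (h : ∀ i j, f ‖q i - q j‖ ≤ g ‖q i - q j‖) :
    pairSum f q ≤ pairSum g q :=
  sum_le_sum fun i _ => sum_le_sum fun j _ => by split_ifs <;> simp [h]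

theorem sum_pairSum_comp_succAbove (f : ℝ → ℝ) (q : Fin (n + 1) → E) :
    ∑ k : Fin (n + 1), pairSum f (q ∘ k.succAbove) = (n - 1) * pairSum f q := by
  have h := Fin.sum_sum_sum_succAbove fun i j => if i < j then f ‖q i - q j‖ else 0
  simp only [lt_irrefl, if_false, sum_const_zero, add_zero, Fin.succAbove_lt_succAbove_iff] at h
  exact h

theorem pairSum_cons (f : ℝ → ℝ) (p : E) (q : Fin n → E) :
    pairSum f (Fin.cons p q : Fin (n + 1) → E) = ∑ i, f ‖p - q i‖ + pairSum f q := by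
  simp [pairSum, Fin.sum_univ_succ, Fin.succ_pos]

theorem exists_sum_le_two_mul_pairSum_div {f : ℝ → ℝ} (hf0 : f 0 = 0) (hn : 0 < n)
    (q : Fin n → E) : ∃ k, ∑ i, f ‖q k - q i‖ ≤ 2 * pairSum f q / n := by
  have hle : ∑ k, ∑ i, f ‖q k - q i‖ ≤ ∑ _k : Fin n, 2 * pairSum f q / n := by
    rw [sum_sum_eq_two_mul_pairSum_add, hf0, sum_const, card_univ, Fintype.card_fin,
      nsmul_eq_mul]
    field_simp
    simp
  obtain ⟨k, -, hk⟩ := exists_le_of_sum_le (univ_nonempty_iff.2 (Fin.pos_iff_nonempty.1 hn)) hle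
  exact ⟨k, hk⟩

end PairSum

section Sphere

variable {E : Type*} [NormedAddCommGroup E] [NormedSpace ℝ E]

theorem exists_norm_eq_one_notMem_dist_lt (hE : 1 < Module.rank ℝ E) {x : E} (hx : ‖x‖ = 1)
    {A : Set E} (hA : A.Finite) {δ : ℝ} (hδ : 0 < δ) :
    ∃ y : E, ‖y‖ = 1 ∧ y ∉ A ∧ dist y x < δ := by
  have hx0 : x ≠ 0 := norm_ne_zero_iff.1 (by rw [hx]; exact one_ne_zero)
  have hsphere : (sphere (0 : E) 1).Nontrivial :=
    ⟨x, by simpa using hx, -x, by simpa using hx,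
      fun h => hx0 (by simpa [← two_smul ℝ x] using congrArg (· + x) h)⟩
  have hacc : AccPt x (𝓟 (sphere (0 : E) 1)) :=
    (isPreconnected_sphere hE 0 1).preperfect_of_nontrivial hsphere x (by simpa using hx)
  have hU : ball x δ ∩ (A \ {x})ᶜ ∈ 𝓝 x :=
    inter_mem (ball_mem_nhds x hδ) (hA.sdiff.isClosed.compl_mem_nhds fun h => h.2 rfl)
  obtain ⟨y, ⟨⟨hyx, hyA⟩, hy⟩, hne⟩ := accPt_iff_nhds.1 hacc _ hU
  exact ⟨y, by simpa using hy, fun h => hyA ⟨h, hne⟩, hyx⟩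

theorem exists_injective_norm_eq_one (hE : 1 < Module.rank ℝ E) :
    ∀ n : ℕ, ∃ q : Fin n → E, (∀ i, ‖q i‖ = 1) ∧ Function.Injective q
  | 0 => ⟨Fin.elim0, fun i => i.elim0, fun i => i.elim0⟩
  | n + 1 => by
    have : Nontrivial E := rank_pos_iff_nontrivial.1 (zero_lt_one.trans hE)
    obtain ⟨q, hq, hinj⟩ := exists_injective_norm_eq_one hE n
    obtain ⟨x, hx⟩ := exists_norm_eq E zero_le_one
    obtain ⟨p, hp, hpq, -⟩ :=
      exists_norm_eq_one_notMem_dist_lt hE hx (Set.finite_range q) one_pos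
    exact ⟨Fin.cons p q, Fin.forall_fin_succ.2 ⟨by simpa using hp, by simpa using hq⟩,
      Fin.cons_injective_iff.2 ⟨hpq, hinj⟩⟩

theorem exists_pairSum_cons_le (hE : 1 < Module.rank ℝ E) {f : ℝ → ℝ} (hf : Continuous f)
    (hf0 : f 0 = 0) {n : ℕ} (hn : 0 < n) {q : Fin n → E} (hq : ∀ i, ‖q i‖ = 1) {ε : ℝ}
    (hε : 0 < ε) : ∃ p : E, ‖p‖ = 1 ∧ p ∉ Set.range q ∧
      pairSum f (Fin.cons p q : Fin (n + 1) → E) ≤ (n + 2) / n * pairSum f q + ε := by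
  obtain ⟨k, hk⟩ := exists_sum_le_two_mul_pairSum_div hf0 hn q
  have hφ : Continuous fun p : E => ∑ i, f ‖p - q i‖ := by fun_prop
  obtain ⟨δ, hδ, hball⟩ := Metric.continuous_iff.1 hφ (q k) ε hε
  obtain ⟨p, hp, hpq, hpδ⟩ :=
    exists_norm_eq_one_notMem_dist_lt hE (hq k) (Set.finite_range q) hδ
  refine ⟨p, hp, hpq, ?_⟩
  have hnear := (abs_lt.1 (Real.dist_eq _ _ ▸ hball p hpδ)).2
  have hn' : (n : ℝ) ≠ 0 := by positivity
  calc pairSum f (Fin.cons p q : Fin (n + 1) → E)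
      = ∑ i, f ‖p - q i‖ + pairSum f q := pairSum_cons f p q
    _ ≤ 2 * pairSum f q / n + ε + pairSum f q := by linarith
    _ = (n + 2) / n * pairSum f q + ε := by field_simp; ring

end Sphere

section Riesz

variable {s : ℝ} {n : ℕ}

noncomputable def rieszPotential (s r : ℝ) : ℝ := r ^ (-s) / s

theorem Vpair_eq_rieszPotential_sub (hs : s ≠ 0) (r : ℝ) :
    Vpair s r = rieszPotential s r - 1 / s := by
  rw [Vpair, if_neg hs, rieszPotential, sub_div]

theorem rieszPotential_zero (hs : s < 0) : rieszPotential s 0 = 0 := by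
  simp [rieszPotential, Real.zero_rpow (neg_ne_zero.2 hs.ne)]

theorem continuous_rieszPotential (hs : s < 0) : Continuous (rieszPotential s) :=
  (Real.continuous_rpow_const (by linarith)).div_const s

theorem Vpair_two_le (hs : s < 0) {r : ℝ} (hr0 : 0 ≤ r) (hr : r ≤ 2) :
    Vpair s 2 ≤ Vpair s r := by
  rw [Vpair_eq_rieszPotential_sub hs.ne, Vpair_eq_rieszPotential_sub hs.ne, rieszPotential,
    rieszPotential, sub_le_sub_iff_right]
  exact div_le_div_of_nonpos_of_le hs.le (Real.rpow_le_rpow hr0 hr (by linarith))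

theorem avgE_eq_pairSum (s : ℝ) (n : ℕ) (q : Fin n → EuclideanSpace ℝ (Fin 3)) :
    avgE s n q = 2 / (n * (n - 1)) * pairSum (Vpair s) q := rfl

theorem avgE_add_inv (hs : s ≠ 0) (hn : 2 ≤ n) (q : Fin n → EuclideanSpace ℝ (Fin 3)) :
    avgE s n q + 1 / s = 2 / (n * (n - 1)) * pairSum (rieszPotential s) q := by
  have hV : pairSum (Vpair s) q = pairSum (rieszPotential s) q - n * (n - 1) / 2 * (1 / s) := by
    rw [← pairSum_const _ q, ← pairSum_sub]
    exact congrArg (pairSum · q) (funext (Vpair_eq_rieszPotential_sub hs))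
  have hn1 : (n : ℝ) - 1 ≠ 0 := by
    have : (2 : ℝ) ≤ n := by exact_mod_cast hn
    linarith
  have hn0 : (n : ℝ) ≠ 0 := by positivity
  rw [avgE_eq_pairSum, hV]
  field_simp
  ring

theorem sum_avgE_comp_succAbove (hn : 2 ≤ n) (q : Fin (n + 1) → EuclideanSpace ℝ (Fin 3)) :
    ∑ k : Fin (n + 1), avgE s n (q ∘ k.succAbove) = (n + 1) * avgE s (n + 1) q := by
  have hn1 : (n : ℝ) - 1 ≠ 0 := by
    have : (2 : ℝ) ≤ n := by exact_mod_cast hn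
    linarith
  have hn0 : (n : ℝ) ≠ 0 := by positivity
  simp only [avgE_eq_pairSum, ← mul_sum, sum_pairSum_comp_succAbove]
  push_cast
  rw [add_sub_cancel_right]
  field_simp

theorem one_lt_rank_euclideanSpace_three : 1 < Module.rank ℝ (EuclideanSpace ℝ (Fin 3)) := by
  rw [← Module.finrank_eq_rank, finrank_euclideanSpace_fin]
  norm_num

theorem Vpair_two_le_avgE (hs : s < 0) (hn : 2 ≤ n) {q : Fin n → EuclideanSpace ℝ (Fin 3)}
    (hq : ∀ i, ‖q i‖ = 1) : Vpair s 2 ≤ avgE s n q := by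
  have hdist : ∀ i j, ‖q i - q j‖ ≤ 2 := fun i j =>
    (norm_sub_le _ _).trans (by rw [hq i, hq j]; norm_num)
  have hP := pairSum_mono (f := fun _ => Vpair s 2) q fun i j =>
    Vpair_two_le hs (norm_nonneg _) (hdist i j)
  rw [pairSum_const] at hP
  have hn1 : (n : ℝ) - 1 ≠ 0 := by
    have : (2 : ℝ) ≤ n := by exact_mod_cast hn
    linarith
  have hn0 : (n : ℝ) ≠ 0 := by positivity
  rw [avgE_eq_pairSum]
  calc Vpair s 2 = 2 / (n * (n - 1)) * (n * (n - 1) / 2 * Vpair s 2) := by field_simp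
    _ ≤ _ := by
      have : (2 : ℝ) ≤ n := by exact_mod_cast hn
      gcongr
      exact div_nonneg zero_le_two (mul_nonneg (by linarith) (by linarith))

theorem vmin_le_avgE (hs : s < 0) (hn : 2 ≤ n) {q : Fin n → EuclideanSpace ℝ (Fin 3)}
    (hq : ∀ i, ‖q i‖ = 1) (hinj : Function.Injective q) : vmin s n ≤ avgE s n q :=
  csInf_le ⟨Vpair s 2, by rintro _ ⟨q, hq, -, rfl⟩; exact Vpair_two_le_avgE hs hn hq⟩
    ⟨q, hq, hinj, rfl⟩

theorem le_vmin {a : ℝ} (h : ∀ q : Fin n → EuclideanSpace ℝ (Fin 3),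
    (∀ i, ‖q i‖ = 1) → Function.Injective q → a ≤ avgE s n q) : a ≤ vmin s n := by
  obtain ⟨q, hq, hinj⟩ := exists_injective_norm_eq_one one_lt_rank_euclideanSpace_three n
  exact le_csInf ⟨_, q, hq, hinj, rfl⟩ fun _ ⟨q, hq, hinj, hE⟩ => hE ▸ h q hq hinj

theorem vmin_le_vmin_succ (hs : s < 0) (hn : 2 ≤ n) : vmin s n ≤ vmin s (n + 1) :=
  le_vmin fun q hq hinj => by
    have hle : ∑ k : Fin (n + 1), avgE s n (q ∘ k.succAbove)
        ≤ ∑ _k : Fin (n + 1), avgE s (n + 1) q := by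
      rw [sum_avgE_comp_succAbove hn, sum_const, card_univ, Fintype.card_fin, nsmul_eq_mul]
      push_cast
      rfl
    obtain ⟨k, -, hk⟩ := exists_le_of_sum_le univ_nonempty hle
    exact (vmin_le_avgE hs hn (fun i => hq _) (hinj.comp Fin.succAbove_right_injective)).trans hk

theorem exists_avgE_cons_le (hs : s < 0) (hn : 2 ≤ n) {q : Fin n → EuclideanSpace ℝ (Fin 3)}
    (hq : ∀ i, ‖q i‖ = 1) {ε : ℝ} (hε : 0 < ε) :
    ∃ p, ‖p‖ = 1 ∧ p ∉ Set.range q ∧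
      n * (n + 1) * (avgE s (n + 1) (Fin.cons p q) + 1 / s)
        ≤ (n + 2) * (n - 1) * (avgE s n q + 1 / s) + ε := by
  obtain ⟨p, hp, hpq, hle⟩ := exists_pairSum_cons_le one_lt_rank_euclideanSpace_three
    (continuous_rieszPotential hs) (rieszPotential_zero hs) (by omega) hq (half_pos hε)
  refine ⟨p, hp, hpq, ?_⟩
  have hn1 : (n : ℝ) - 1 ≠ 0 := by
    have : (2 : ℝ) ≤ n := by exact_mod_cast hn
    linarith
  have hn0 : (n : ℝ) ≠ 0 := by positivity
  rw [avgE_add_inv hs.ne (by omega), avgE_add_inv hs.ne hn]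
  push_cast
  rw [add_sub_cancel_right]
  calc _ = 2 * pairSum (rieszPotential s) (Fin.cons p q : Fin (n + 1) → _) := by field_simp
    _ ≤ 2 * ((n + 2) / n * pairSum (rieszPotential s) q + ε / 2) := by linarith
    _ = (n + 2) * (n - 1) * (2 / (n * (n - 1)) * pairSum (rieszPotential s) q) + ε := by
      field_simp

theorem mul_vmin_succ_add_inv_le (hs : s < 0) (hn : 2 ≤ n) :
    n * (n + 1) * (vmin s (n + 1) + 1 / s) ≤ (n + 2) * (n - 1) * (vmin s n + 1 / s) := by
  have hc : (0 : ℝ) < (n + 2) * (n - 1) := by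
    have : (2 : ℝ) ≤ n := by exact_mod_cast hn
    nlinarith
  have key : n * (n + 1) * (vmin s (n + 1) + 1 / s) / ((n + 2) * (n - 1)) - 1 / s ≤ vmin s n :=
    le_vmin fun q hq hinj => by
      rw [sub_le_iff_le_add, div_le_iff₀ hc]
      refine le_of_forall_pos_le_add fun ε hε => ?_
      obtain ⟨p, hp, hpq, hle⟩ := exists_avgE_cons_le hs hn hq hε
      have hv := vmin_le_avgE hs (by omega : 2 ≤ n + 1) (q := Fin.cons p q)
        (Fin.forall_fin_succ.2 ⟨by simpa using hp, by simpa using hq⟩)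
        (Fin.cons_injective_iff.2 ⟨hpq, hinj⟩)
      have := mul_le_mul_of_nonneg_left (add_le_add_right hv (1 / s))
        (by positivity : (0 : ℝ) ≤ n * (n + 1))
      linarith
  have := (div_le_iff₀ hc).1 (sub_le_iff_le_add.1 key)
  linarith

end Riesz

theorem second_difference_bounds {x a b c : ℝ} (hx : 2 < x) (hab : a ≤ b) (hbc : b ≤ c)
    (ha : (x - 1) * x * b ≤ (x + 1) * (x - 2) * a)
    (hc : x * (x + 1) * c ≤ (x + 2) * (x - 1) * b) :
    2 / ((x + 1) * (x - 2)) * b ≤ a - 2 * b + c ∧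
      a - 2 * b + c ≤ -(2 / ((x + 1) * x)) * b := by
  have h1 : 0 < (x + 1) * (x - 2) := by nlinarith
  have h2 : 0 < (x + 1) * x := by nlinarith
  constructor
  · rw [div_mul_eq_mul_div, div_le_iff₀ h1]
    nlinarith
  · rw [neg_mul, div_mul_eq_mul_div, le_neg, div_le_iff₀ h2]
    nlinarith

theorem stmt0 (s : ℝ) (hs : s < 0) (N : ℕ) (hN : 2 < N) :
    2 / (((N : ℝ) + 1) * ((N : ℝ) - 2)) * (vmin s N + 1 / s)
        ≤ vmin s (N - 1) - 2 * vmin s N + vmin s (N + 1)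
    ∧ vmin s (N - 1) - 2 * vmin s N + vmin s (N + 1)
        ≤ -(2 / (((N : ℝ) + 1) * (N : ℝ))) * (vmin s N + 1 / s) := by
  obtain ⟨n, rfl⟩ : ∃ n, N = n + 1 := ⟨N - 1, by omega⟩
  have hn : 2 ≤ n := by omega
  have hn' : (2 : ℝ) ≤ n := by exact_mod_cast hn
  have hadd₁ := mul_vmin_succ_add_inv_le hs hn
  have hadd₂ := mul_vmin_succ_add_inv_le hs (n := n + 1) (by omega)
  push_cast at hadd₂ ⊢
  have key := second_difference_bounds (x := (n : ℝ) + 1)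
    (by linarith)
    (add_le_add_right (vmin_le_vmin_succ hs hn) (1 / s))
    (add_le_add_right (vmin_le_vmin_succ hs (n := n + 1) (by omega)) (1 / s))
    (by linarith) (by linarith)
  constructor <;> linarith [key.1, key.2]
end

section
/- For s = 10, the second discrete derivative of the minimal average standardized Riesz pair-energy at N = 3 is strictly positive: v_{10}(2) - 2·v_{10}(3) + v_{10}(4) > 0. In particular, the map N ↦ v_{10}(N) is not locally strictly concave. -/
open scoped BigOperators

/-! For even `s = 2k` the function `t ↦ t⁻ᵏ` is convex, so `V_{2k}(r)` lies above its tangent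
line in `r²` at any `t₀`. For unit vectors `∑_{i<j} ‖qᵢ - qⱼ‖² = N² - ‖∑ qᵢ‖² ≤ N²`, so the mean
squared distance is at most `2N/(N-1)`, and the tangent at `t₀ = 2N/(N-1)` gives
`v_{2k}(N) ≥ ((2N/(N-1))⁻ᵏ - 1)/(2k)`: this is `(4⁻⁵ - 1)/10` for `N = 2` and `((3/8)⁵ - 1)/10` for
`N = 4`. The equilateral triangle gives `v_{10}(3) ≤ (3⁻⁵ - 1)/10`, and
`4⁻⁵ - 2·3⁻⁵ + (3/8)⁵ > 0`. -/

section PairSums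

variable {ι : Type*} [Fintype ι] [LinearOrder ι]

theorem two_mul_sum_sum_ite_lt_add_sum_diag (f : ι → ι → ℝ) (hf : ∀ i j, f i j = f j i) :
    2 * ∑ i, ∑ j, (if i < j then f i j else 0) + ∑ i, f i i = ∑ i, ∑ j, f i j := by
  have hswap : ∑ i, ∑ j, (if j < i then f i j else 0)
      = ∑ i, ∑ j, (if i < j then f i j else 0) := by
    rw [Finset.sum_comm]
    simp only [hf]
  have hsplit : ∀ i j, f i j = (if i < j then f i j else 0) + (if j < i then f i j else 0)
      + (if i = j then f i j else 0) := by
    intro i j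
    rcases lt_trichotomy i j with h | rfl | h
    · simp [h, h.not_gt, h.ne]
    · simp
    · simp [h, h.not_gt, h.ne']
  simp_rw [Finset.sum_congr rfl fun i _ => Finset.sum_congr rfl fun j _ => hsplit i j,
    Finset.sum_add_distrib, Finset.sum_ite_eq, Finset.mem_univ, if_true, hswap]
  ring

theorem sum_sum_ite_lt_one :
    ∑ i : ι, ∑ j : ι, (if i < j then (1 : ℝ) else 0)
      = Fintype.card ι * (Fintype.card ι - 1) / 2 := by
  have h := two_mul_sum_sum_ite_lt_add_sum_diag (fun (_ _ : ι) => (1 : ℝ)) fun _ _ => rfl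
  simp only [Finset.sum_const, Finset.card_univ, nsmul_eq_mul, mul_one] at h
  linarith

end PairSums

theorem sum_sum_norm_sub_sq_of_norm_eq_one {E ι : Type*} [NormedAddCommGroup E]
    [InnerProductSpace ℝ E] [Fintype ι] (q : ι → E) (hq : ∀ i, ‖q i‖ = 1) :
    ∑ i, ∑ j, ‖q i - q j‖ ^ 2 = 2 * Fintype.card ι ^ 2 - 2 * ‖∑ i, q i‖ ^ 2 := by
  have hpair : ∀ i j, ‖q i - q j‖ ^ 2 = 2 - 2 * inner ℝ (q i) (q j) := by
    intro i j
    rw [norm_sub_sq_real, hq, hq]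
    ring
  rw [← real_inner_self_eq_norm_sq, sum_inner]
  simp only [hpair, inner_sum, Finset.sum_sub_distrib, ← Finset.mul_sum, Finset.sum_const,
    Finset.card_univ, nsmul_eq_mul]
  ring

theorem sum_sum_ite_lt_norm_sub_sq_le {E ι : Type*} [NormedAddCommGroup E]
    [InnerProductSpace ℝ E] [Fintype ι] [LinearOrder ι] (q : ι → E) (hq : ∀ i, ‖q i‖ = 1) :
    ∑ i, ∑ j, (if i < j then ‖q i - q j‖ ^ 2 else 0) ≤ Fintype.card ι ^ 2 := by
  have h := two_mul_sum_sum_ite_lt_add_sum_diag (fun i j => ‖q i - q j‖ ^ 2)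
    fun i j => by rw [norm_sub_rev]
  simp only [sub_self, norm_zero, ne_eq, OfNat.ofNat_ne_zero, not_false_eq_true, zero_pow,
    Finset.sum_const_zero, add_zero, sum_sum_norm_sub_sq_of_norm_eq_one q hq] at h
  nlinarith [sq_nonneg ‖∑ i, q i‖]

theorem one_sub_mul_sub_one_le_inv_pow {x : ℝ} (hx : 0 < x) (n : ℕ) :
    1 - n * (x - 1) ≤ (x ^ n)⁻¹ := by
  have hinv : 1 - x ≤ x⁻¹ - 1 := by
    have h : x⁻¹ - 1 - (1 - x) = (x - 1) ^ 2 / x := by field_simp; ring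
    linarith [div_nonneg (sq_nonneg (x - 1)) hx.le]
  calc 1 - n * (x - 1) = 1 + n * (1 - x) := by ring
    _ ≤ 1 + n * (x⁻¹ - 1) := by gcongr
    _ ≤ (1 + (x⁻¹ - 1)) ^ n := one_add_mul_le_pow (by linarith [inv_pos.2 hx]) n
    _ = (x ^ n)⁻¹ := by rw [add_sub_cancel, inv_pow]

theorem Vpair_two_mul_natCast {k : ℕ} (hk : k ≠ 0) {r : ℝ} (hr : 0 < r) :
    Vpair (2 * k) r = (((r ^ 2) ^ k)⁻¹ - 1) / (2 * k) := by
  rw [Vpair, if_neg (by positivity), ← pow_mul,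
    show (2 * k : ℝ) = ((2 * k : ℕ) : ℝ) by push_cast; ring, Real.rpow_neg hr.le, Real.rpow_natCast]

-- The tangent line of the convex function `t ↦ t⁻ᵏ` at `t₀`, evaluated at `t = r²`.
theorem Vpair_two_mul_natCast_ge_tangent {k : ℕ} (hk : k ≠ 0) {t₀ : ℝ} (ht₀ : 0 < t₀) {r : ℝ}
    (hr : 0 < r) :
    ((t₀ ^ k)⁻¹ * (1 + k) - 1) / (2 * k) - (t₀ ^ k)⁻¹ / (2 * t₀) * r ^ 2 ≤ Vpair (2 * k) r := by
  have hinv : (t₀ ^ k)⁻¹ * (1 - k * (r ^ 2 / t₀ - 1)) ≤ ((r ^ 2) ^ k)⁻¹ :=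
    calc (t₀ ^ k)⁻¹ * (1 - k * (r ^ 2 / t₀ - 1))
        ≤ (t₀ ^ k)⁻¹ * ((r ^ 2 / t₀) ^ k)⁻¹ := by
          gcongr
          exact one_sub_mul_sub_one_le_inv_pow (by positivity) k
      _ = ((r ^ 2) ^ k)⁻¹ := by rw [div_pow, inv_div]; field_simp
  rw [Vpair_two_mul_natCast hk hr]
  calc ((t₀ ^ k)⁻¹ * (1 + k) - 1) / (2 * k) - (t₀ ^ k)⁻¹ / (2 * t₀) * r ^ 2
      = ((t₀ ^ k)⁻¹ * (1 - k * (r ^ 2 / t₀ - 1)) - 1) / (2 * k) := by field_simp; ring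
    _ ≤ (((r ^ 2) ^ k)⁻¹ - 1) / (2 * k) := by gcongr

theorem norm_sub_pos_of_injective {α E : Type*} [NormedAddCommGroup E] {q : α → E}
    (hinj : Function.Injective q) {i j : α} (hij : i ≠ j) : 0 < ‖q i - q j‖ :=
  norm_pos_iff.2 (sub_ne_zero.2 (hinj.ne hij))

theorem avgE_ge_of_forall_le_Vpair {s a b : ℝ} (hb : 0 ≤ b)
    (hV : ∀ r, 0 < r → a - b * r ^ 2 ≤ Vpair s r) {N : ℕ} (hN : 2 ≤ N)
    {q : Fin N → EuclideanSpace ℝ (Fin 3)} (hq : ∀ i, ‖q i‖ = 1) (hinj : Function.Injective q) :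
    a - b * (2 * N / (N - 1)) ≤ avgE s N q := by
  have hN' : (2 : ℝ) ≤ N := by exact_mod_cast hN
  have hpos : (0 : ℝ) < N * (N - 1) := by nlinarith
  have hsq := sum_sum_ite_lt_norm_sub_sq_le q hq
  rw [Fintype.card_fin] at hsq
  have hpairs : ∑ i, ∑ j, (if i < j then a - b * ‖q i - q j‖ ^ 2 else 0)
      ≤ ∑ i, ∑ j, (if i < j then Vpair s ‖q i - q j‖ else 0) := by
    gcongr with i _ j _
    split_ifs with h
    · exact hV _ (norm_sub_pos_of_injective hinj h.ne)
    · exact le_rfl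
  have hlin : ∑ i, ∑ j, (if i < j then a - b * ‖q i - q j‖ ^ 2 else 0)
      = a * ∑ i : Fin N, ∑ j : Fin N, (if i < j then (1 : ℝ) else 0)
        - b * ∑ i, ∑ j, (if i < j then ‖q i - q j‖ ^ 2 else 0) := by
    simp only [Finset.mul_sum, ← Finset.sum_sub_distrib]
    refine Finset.sum_congr rfl fun i _ => Finset.sum_congr rfl fun j _ => ?_
    split_ifs <;> ring
  rw [hlin, sum_sum_ite_lt_one, Fintype.card_fin] at hpairs
  unfold avgE
  calc a - b * (2 * N / (N - 1))
      = 2 / (N * (N - 1)) * (a * (N * (N - 1) / 2) - b * N ^ 2) := by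
        have : (N : ℝ) - 1 ≠ 0 := by linarith
        field_simp
    _ ≤ 2 / (N * (N - 1)) * (a * (N * (N - 1) / 2)
          - b * ∑ i, ∑ j, (if i < j then ‖q i - q j‖ ^ 2 else 0)) := by gcongr
    _ ≤ _ := by gcongr

theorem avgE_two_mul_natCast_ge {k : ℕ} (hk : k ≠ 0) {N : ℕ} (hN : 2 ≤ N)
    {q : Fin N → EuclideanSpace ℝ (Fin 3)} (hq : ∀ i, ‖q i‖ = 1) (hinj : Function.Injective q) :
    (((2 * N / (N - 1) : ℝ) ^ k)⁻¹ - 1) / (2 * k) ≤ avgE (2 * k) N q := by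
  have hN' : (2 : ℝ) ≤ N := by exact_mod_cast hN
  set t₀ : ℝ := 2 * N / (N - 1)
  have ht₀ : 0 < t₀ := div_pos (by linarith) (by linarith)
  calc ((t₀ ^ k)⁻¹ - 1) / (2 * k)
      = ((t₀ ^ k)⁻¹ * (1 + k) - 1) / (2 * k) - (t₀ ^ k)⁻¹ / (2 * t₀) * t₀ := by
        field_simp
        ring
    _ ≤ avgE (2 * k) N q :=
        avgE_ge_of_forall_le_Vpair (by positivity)
          (fun _ hr => Vpair_two_mul_natCast_ge_tangent hk ht₀ hr) hN hq hinj

theorem le_vmin_of_forall_le_avgE {s A : ℝ} {N : ℕ} (hA : A ≤ 0)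
    (h : ∀ q : Fin N → EuclideanSpace ℝ (Fin 3), (∀ i, ‖q i‖ = 1) → Function.Injective q →
      A ≤ avgE s N q) :
    A ≤ vmin s N :=
  Real.le_sInf (by rintro _ ⟨q, hq, hinj, rfl⟩; exact h q hq hinj) hA

theorem vmin_le_avgE_of_forall_le {s A : ℝ} {N : ℕ}
    (h : ∀ q : Fin N → EuclideanSpace ℝ (Fin 3), (∀ i, ‖q i‖ = 1) → Function.Injective q →
      A ≤ avgE s N q)
    {q : Fin N → EuclideanSpace ℝ (Fin 3)} (hq : ∀ i, ‖q i‖ = 1) (hinj : Function.Injective q) :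
    vmin s N ≤ avgE s N q :=
  csInf_le ⟨A, by rintro _ ⟨q, hq, hinj, rfl⟩; exact h q hq hinj⟩ ⟨q, hq, hinj, rfl⟩

theorem vmin_two_mul_natCast_ge {k : ℕ} (hk : k ≠ 0) {N : ℕ} (hN : 2 ≤ N) :
    (((2 * N / (N - 1) : ℝ) ^ k)⁻¹ - 1) / (2 * k) ≤ vmin (2 * k) N := by
  have hN' : (2 : ℝ) ≤ N := by exact_mod_cast hN
  have ht₀ : 1 ≤ (2 * N / (N - 1) : ℝ) := by
    rw [one_le_div (by linarith)]
    linarith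
  refine le_vmin_of_forall_le_avgE ?_ fun _ hq hinj => avgE_two_mul_natCast_ge hk hN hq hinj
  exact div_nonpos_of_nonpos_of_nonneg
    (sub_nonpos.2 (inv_le_one_of_one_le₀ (one_le_pow₀ ht₀))) (by positivity)

theorem avgE_eq_Vpair_of_norm_sub_eq {s d : ℝ} {N : ℕ} (hN : 2 ≤ N)
    {q : Fin N → EuclideanSpace ℝ (Fin 3)} (h : ∀ i j, i ≠ j → ‖q i - q j‖ = d) :
    avgE s N q = Vpair s d := by
  have hN' : (2 : ℝ) ≤ N := by exact_mod_cast hN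
  have hconst : ∑ i, ∑ j, (if i < j then Vpair s ‖q i - q j‖ else 0)
      = Vpair s d * ∑ i : Fin N, ∑ j : Fin N, (if i < j then (1 : ℝ) else 0) := by
    simp only [Finset.mul_sum]
    refine Finset.sum_congr rfl fun i _ => Finset.sum_congr rfl fun j _ => ?_
    split_ifs with hij
    · rw [h i j hij.ne, mul_one]
    · rw [mul_zero]
  have : (N : ℝ) - 1 ≠ 0 := by linarith
  rw [avgE, hconst, sum_sum_ite_lt_one, Fintype.card_fin]
  field_simp

noncomputable def equilateralTriangle : Fin 3 → EuclideanSpace ℝ (Fin 3) :=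
  ![!₂[1, 0, 0], !₂[-1 / 2, √3 / 2, 0], !₂[-1 / 2, -(√3 / 2), 0]]

theorem norm_equilateralTriangle (i : Fin 3) : ‖equilateralTriangle i‖ = 1 := by
  have h3 : √3 ^ 2 = 3 := Real.sq_sqrt (by norm_num)
  rw [← Real.sqrt_sq (norm_nonneg _), EuclideanSpace.real_norm_sq_eq, Fin.sum_univ_three,
    Real.sqrt_eq_one]
  fin_cases i <;> simp [equilateralTriangle] <;> nlinarith [h3]

theorem norm_sub_equilateralTriangle {i j : Fin 3} (hij : i ≠ j) :
    ‖equilateralTriangle i - equilateralTriangle j‖ = √3 := by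
  have h3 : √3 ^ 2 = 3 := Real.sq_sqrt (by norm_num)
  rw [← Real.sqrt_sq (norm_nonneg _), EuclideanSpace.real_norm_sq_eq, Fin.sum_univ_three]
  congr 1
  fin_cases i <;> fin_cases j <;> simp [equilateralTriangle] at hij ⊢ <;> nlinarith [h3]

theorem injective_equilateralTriangle : Function.Injective equilateralTriangle := by
  intro i j hij
  by_contra hne
  have h := norm_sub_equilateralTriangle hne
  rw [hij, sub_self, norm_zero] at h
  exact Real.sqrt_ne_zero'.2 three_pos h.symm

theorem vmin_two_mul_natCast_three_le {k : ℕ} (hk : k ≠ 0) :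
    vmin (2 * k) 3 ≤ (((3 : ℝ) ^ k)⁻¹ - 1) / (2 * k) :=
  calc vmin (2 * k) 3
      ≤ avgE (2 * k) 3 equilateralTriangle :=
        vmin_le_avgE_of_forall_le
          (fun _ hq hinj => avgE_two_mul_natCast_ge hk (by norm_num) hq hinj)
          norm_equilateralTriangle injective_equilateralTriangle
    _ = Vpair (2 * k) √3 :=
        avgE_eq_Vpair_of_norm_sub_eq (by norm_num) fun _ _ => norm_sub_equilateralTriangle
    _ = (((3 : ℝ) ^ k)⁻¹ - 1) / (2 * k) := by
        rw [Vpair_two_mul_natCast hk (by positivity), Real.sq_sqrt zero_le_three]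

theorem stmt2 :
    vmin 10 2 - 2 * vmin 10 3 + vmin 10 4 > 0 ∧
    ¬ (∀ N : ℕ, 2 < N → vmin 10 (N - 1) - 2 * vmin 10 N + vmin 10 (N + 1) < 0) := by
  have h2 := vmin_two_mul_natCast_ge (k := 5) (by norm_num) (N := 2) le_rfl
  have h3 := vmin_two_mul_natCast_three_le (k := 5) (by norm_num)
  have h4 := vmin_two_mul_natCast_ge (k := 5) (by norm_num) (N := 4) (by norm_num)
  norm_num at h2 h3 h4
  have hpos : vmin 10 2 - 2 * vmin 10 3 + vmin 10 4 > 0 := by linarith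
  exact ⟨hpos, fun h => (h 3 (by norm_num)).not_gt hpos⟩
end

section
/- For every positive integer K and every real x with 0 < x < 1, one has (1 - x)^{1/2} > Σ_{k=0}^{K-1} ((-1/2)_k / k!) · x^k - ((1/2)_{K-1} / (K-1)!) · x^K, where (a)_k denotes the Pochhammer symbol (rising factorial) (a)_k = a(a+1)⋯(a+k-1), with (a)_0 = 1. -/
/-!
The coefficients `(a)_k / k!` are `Ring.multichoose a k`, the coefficients of the binomial series
of `(1 - x)^(-a)`. Pascal's rule `multichoose a (k+1) = multichoose (a-1) (k+1) + multichoose a k`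
telescopes the right-hand side into `(1 - x) · ∑_{k<K} multichoose (1/2) k · x^k`. For `a = 1/2 > 0`
all terms of the series of `(1 - x)^(-1/2)` are positive, so this partial sum is strictly below
`(1 - x)^(-1/2)`; multiplying by `1 - x` gives the bound.
-/

open Finset

namespace Ring

theorem one_sub_mul_sum_range_multichoose_add {R : Type*} [CommRing R] [BinomialRing R]
    (a x : R) (K : ℕ) :
    (1 - x) * ∑ k ∈ range (K + 1), multichoose a k * x ^ k + multichoose a K * x ^ (K + 1) =
      ∑ k ∈ range (K + 1), multichoose (a - 1) k * x ^ k := by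
  induction K with
  | zero => simp
  | succ K ih =>
    have pascal := multichoose_succ_succ (a - 1) K
    rw [sub_add_cancel] at pascal
    rw [sum_range_succ, sum_range_succ _ (K + 1), ← ih]
    linear_combination x ^ (K + 1) * pascal

theorem multichoose_eq_ascPochhammer_eval_div_factorial {𝕜 : Type*} [Field 𝕜] [CharZero 𝕜]
    (a : 𝕜) (n : ℕ) : multichoose a n = (ascPochhammer 𝕜 n).eval a / n.factorial := by
  rw [eq_div_iff (Nat.cast_ne_zero.mpr n.factorial_ne_zero), mul_comm, ← nsmul_eq_mul,
    factorial_nsmul_multichoose_eq_ascPochhammer, Polynomial.ascPochhammer_smeval_eq_eval]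

theorem multichoose_pos {a : ℝ} (ha : 0 < a) (n : ℕ) : 0 < multichoose a n := by
  rw [multichoose_eq_ascPochhammer_eval_div_factorial]
  exact div_pos (ascPochhammer_pos n a ha) (by positivity)

end Ring

namespace Real

theorem hasSum_multichoose_mul_pow (a : ℝ) {x : ℝ} (hx : |x| < 1) :
    HasSum (fun n ↦ Ring.multichoose a n * x ^ n) ((1 - x) ^ (-a)) := by
  have h := (one_div_one_sub_rpow_hasFPowerSeriesOnBall_zero a).hasSum (y := x) (by
    simpa [enorm_eq_nnnorm, ← NNReal.coe_lt_one] using hx)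
  simp only [FormalMultilinearSeries.ofScalars_apply_eq, smul_eq_mul, zero_add,
    ← Ring.multichoose_eq, one_div] at h
  rwa [rpow_neg (by linarith [le_abs_self x])]

theorem sum_range_multichoose_mul_pow_lt {a x : ℝ} (ha : 0 < a) (hx0 : 0 < x) (hx1 : x < 1)
    (K : ℕ) : ∑ k ∈ range K, Ring.multichoose a k * x ^ k < (1 - x) ^ (-a) := by
  have hterm (k : ℕ) : 0 < Ring.multichoose a k * x ^ k :=
    mul_pos (Ring.multichoose_pos ha k) (pow_pos hx0 k)
  calc ∑ k ∈ range K, Ring.multichoose a k * x ^ k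
      < ∑ k ∈ range (K + 1), Ring.multichoose a k * x ^ k := by
        rw [sum_range_succ]; linarith [hterm K]
    _ ≤ (1 - x) ^ (-a) :=
        sum_le_hasSum _ (fun k _ ↦ (hterm k).le)
          (hasSum_multichoose_mul_pow a (abs_lt.mpr ⟨by linarith, hx1⟩))

end Real

theorem stmt4 (K : ℕ) (hK : 1 ≤ K) (x : ℝ) (hx0 : 0 < x) (hx1 : x < 1) :
    (1 - x) ^ ((1 : ℝ) / 2) >
      (∑ k ∈ Finset.range K,
          (ascPochhammer ℝ k).eval (-(1 / 2) : ℝ) / (Nat.factorial k) * x ^ k)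
        - (ascPochhammer ℝ (K - 1)).eval ((1 / 2) : ℝ) / (Nat.factorial (K - 1)) * x ^ K := by
  obtain ⟨K, rfl⟩ := Nat.exists_eq_add_of_le' hK
  simp only [← Ring.multichoose_eq_ascPochhammer_eval_div_factorial, Nat.add_sub_cancel,
    show (-(1 / 2) : ℝ) = 1 / 2 - 1 by norm_num]
  rw [← Ring.one_sub_mul_sum_range_multichoose_add, add_sub_cancel_right, gt_iff_lt]
  calc _ < (1 - x) * (1 - x) ^ (-(1 / 2) : ℝ) := mul_lt_mul_of_pos_left
        (Real.sum_range_multichoose_mul_pow_lt (by norm_num) hx0 hx1 _) (by linarith)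
    _ = (1 - x) ^ ((1 : ℝ) / 2) := by
        rw [← Real.rpow_one_add' (by linarith) (by norm_num)]
        norm_num
end

section
/- For every integer N ≥ 2, the minimal average standardized Riesz pair-energy at s = -2 equals v_{-2}(N) = -(1/2)·(N+1)/(N-1). -/
open scoped BigOperators

/-! For unit vectors `V_{-2}(‖x - y‖) = ⟪x, y⟫ - 1/2`, so summing over all pairs expresses the
average energy as `-(N + 1)/(2(N - 1)) + ‖∑ qᵢ‖² / (N(N - 1))`. The minimum is therefore attained
exactly by centred configurations, such as the `N`-th roots of unity on an equator. -/

open scoped RealInnerProductSpace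

section PairSums

variable {ι : Type*} [Fintype ι] [LinearOrder ι]

theorem two_mul_sum_sum_ite_lt {R : Type*} [CommRing R] (f : ι → ι → R)
    (hf : ∀ i j, f i j = f j i) :
    2 * ∑ i, ∑ j, (if i < j then f i j else 0) = ∑ i, ∑ j, f i j - ∑ i, f i i := by
  have hswap :
      ∑ i, ∑ j, (if j < i then f i j else 0) = ∑ i, ∑ j, (if i < j then f i j else 0) := by
    rw [Finset.sum_comm]
    simp only [hf]
  have hsplit : ∀ i j, f i j
      = (if i < j then f i j else 0) + (if j < i then f i j else 0) + (if i = j then f i j else 0) := by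
    intro i j
    rcases lt_trichotomy i j with h | rfl | h
    · simp [h, h.ne, h.not_gt]
    · simp
    · simp [h, h.ne', h.not_gt]
  conv_rhs => enter [1, 2, i, 2, j]; rw [hsplit i j]
  simp only [Finset.sum_add_distrib, hswap, Finset.sum_ite_eq, Finset.mem_univ, if_true]
  ring

end PairSums

section UnitVectors

variable {E : Type*} [NormedAddCommGroup E] [InnerProductSpace ℝ E]

theorem sum_sum_inner_eq_norm_sum_sq {ι : Type*} [Fintype ι] (q : ι → E) :
    ∑ i, ∑ j, ⟪q i, q j⟫ = ‖∑ i, q i‖ ^ 2 := by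
  rw [← real_inner_self_eq_norm_sq, sum_inner]
  simp only [inner_sum]

theorem Vpair_neg_two (r : ℝ) : Vpair (-2) r = -(1 / 2) * (r ^ 2 - 1) := by
  rw [Vpair, if_neg (by norm_num), neg_neg, Real.rpow_two]
  ring

theorem Vpair_neg_two_norm_sub {x y : E} (hx : ‖x‖ = 1) (hy : ‖y‖ = 1) :
    Vpair (-2) ‖x - y‖ = ⟪x, y⟫ - 1 / 2 := by
  rw [Vpair_neg_two, norm_sub_sq_real, hx, hy]
  ring

theorem exists_injective_norm_one_sum_eq_zero (L : ℂ →ₗᵢ[ℝ] E) {N : ℕ} (hN : 1 < N) :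
    ∃ q : Fin N → E, (∀ i, ‖q i‖ = 1) ∧ Function.Injective q ∧ ∑ i, q i = 0 := by
  have hζ := Complex.isPrimitiveRoot_exp N (by omega)
  set ζ := Complex.exp (2 * Real.pi * Complex.I / N)
  refine ⟨fun k => L (ζ ^ (k : ℕ)), fun k => ?_, fun k l hkl => ?_, ?_⟩
  · rw [L.norm_map, norm_pow, hζ.norm'_eq_one (by omega), one_pow]
  · exact Fin.ext (hζ.pow_inj k.isLt l.isLt (L.injective hkl))
  · rw [← map_sum, Fin.sum_univ_eq_sum_range (ζ ^ ·), hζ.geom_sum_eq_zero hN, map_zero]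

end UnitVectors

noncomputable def complexToEuclideanSpaceFinThree : ℂ →ₗᵢ[ℝ] EuclideanSpace ℝ (Fin 3) where
  toFun z := !₂[z.re, z.im, 0]
  map_add' z w := by ext i; fin_cases i <;> simp
  map_smul' c z := by ext i; fin_cases i <;> simp
  norm_map' z := by
    simp [EuclideanSpace.norm_eq, Fin.sum_univ_three, Complex.norm_eq_sqrt_sq_add_sq]

theorem avgE_neg_two {N : ℕ} (hN : 2 ≤ N) {q : Fin N → EuclideanSpace ℝ (Fin 3)}
    (hq : ∀ i, ‖q i‖ = 1) :
    avgE (-2) N q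
      = -(1 / 2) * (((N : ℝ) + 1) / ((N : ℝ) - 1)) + ‖∑ i, q i‖ ^ 2 / ((N : ℝ) * ((N : ℝ) - 1)) := by
  have hN' : (2 : ℝ) ≤ N := by exact_mod_cast hN
  have hfull : ∑ i, ∑ j, Vpair (-2) ‖q i - q j‖ = ‖∑ i, q i‖ ^ 2 - (N : ℝ) ^ 2 / 2 := by
    simp only [Vpair_neg_two_norm_sub (hq _) (hq _), Finset.sum_sub_distrib,
      sum_sum_inner_eq_norm_sum_sq, Finset.sum_const, Finset.card_univ, Fintype.card_fin,
      nsmul_eq_mul]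
    ring
  have hdiag : ∑ i, Vpair (-2) ‖q i - q i‖ = (N : ℝ) / 2 := by
    simp [Vpair_neg_two, div_eq_mul_inv]
  rw [avgE, div_mul_eq_mul_div, two_mul_sum_sum_ite_lt _ fun i j => by rw [norm_sub_rev], hfull,
    hdiag]
  field_simp
  ring

theorem stmt5 (N : ℕ) (hN : 2 ≤ N) :
    vmin (-2) N = -(1 / 2) * (((N : ℝ) + 1) / ((N : ℝ) - 1)) := by
  refine IsLeast.csInf_eq ⟨?_, ?_⟩
  · obtain ⟨q, hq, hinj, hsum⟩ :=
      exists_injective_norm_one_sum_eq_zero complexToEuclideanSpaceFinThree hN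
    exact ⟨q, hq, hinj, by rw [avgE_neg_two hN hq, hsum]; simp⟩
  · rintro _ ⟨q, hq, -, rfl⟩
    have hN' : (2 : ℝ) ≤ N := by exact_mod_cast hN
    rw [avgE_neg_two hN hq]
    exact le_add_of_nonneg_right (div_nonneg (sq_nonneg _) (by nlinarith))
end

section
/- Let s < -2 be a real number and let N ≥ 2 be an even integer. Then the minimal average standardized Riesz pair-energy equals v_s(N) = (1/s)·((2^{-s-1} - 1)·N + 1)/(N - 1), equivalently v_s(N) = -(1/|s|)·((2^{|s|-1} - 1)·N + 1)/(N - 1). -/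
open scoped BigOperators

open Real Finset Filter Topology

/-! For `t = -s ≥ 2` and `0 ≤ r ≤ 2` one has `r ^ t ≤ 2 ^ (t - 2) * r ^ 2`, so the pair energy is
bounded below by an affine function of the squared distance. Summing over all pairs and using
`∑ i, ∑ j, ‖q i - q j‖ ^ 2 = 2 N ^ 2 - 2 ‖∑ i, q i‖ ^ 2 ≤ 2 N ^ 2` gives the lower bound, which is
attained by `N / 2` points at each of two antipodal poles. These degenerate configurations
are limits of configurations of distinct points (two short meridian arcs ending at the poles), and
for `s < 0` the energy is continuous, so the bound is the infimum. -/

section PairSums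

variable {ι : Type*} [Fintype ι]

theorem sum_sum_ite_lt_of_symm [LinearOrder ι] (f : ι → ι → ℝ) (hf : ∀ i j, f i j = f j i) :
    ∑ i, ∑ j, (if i < j then f i j else 0) = (∑ i, ∑ j, f i j - ∑ i, f i i) / 2 := by
  have hsplit : ∀ i j, f i j = (if i < j then f i j else 0) + (if j < i then f j i else 0) +
      (if i = j then f i j else 0) := by
    intro i j
    rcases lt_trichotomy i j with h | rfl | h
    · simp [h, h.not_gt, h.ne]
    · simp
    · simp [h, h.not_gt, h.ne', hf i j]
  have hswap : ∑ i, ∑ j, (if j < i then f j i else 0) = ∑ i, ∑ j, (if i < j then f i j else 0) :=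
    Finset.sum_comm
  have hdiag : ∑ i, ∑ j, (if i = j then f i j else 0) = ∑ i, f i i := by simp
  have htotal : ∑ i, ∑ j, f i j = ∑ i, ∑ j, (if i < j then f i j else 0) +
      ∑ i, ∑ j, (if j < i then f j i else 0) + ∑ i, ∑ j, (if i = j then f i j else 0) := by
    simp only [← sum_add_distrib, ← hsplit]
  linarith

theorem sum_sum_norm_sub_sq {E : Type*} [NormedAddCommGroup E] [InnerProductSpace ℝ E]
    (q : ι → E) :
    ∑ i, ∑ j, ‖q i - q j‖ ^ 2 = 2 * Fintype.card ι * ∑ i, ‖q i‖ ^ 2 - 2 * ‖∑ i, q i‖ ^ 2 := by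
  simp only [norm_sub_sq_real, sum_add_distrib, sum_sub_distrib, sum_const, card_univ,
    nsmul_eq_mul, ← mul_sum, ← sum_inner, ← inner_sum, real_inner_self_eq_norm_sq]
  ring

end PairSums

section Vpair

variable {s : ℝ}

theorem Vpair_of_ne_zero (hs : s ≠ 0) (r : ℝ) : Vpair s r = (r ^ (-s) - 1) / s := if_neg hs

theorem continuous_Vpair (hs : s < 0) : Continuous (Vpair s) := by
  simp only [funext (Vpair_of_ne_zero hs.ne)]
  fun_prop (disch := linarith)

theorem rpow_le_two_rpow_sub_two_mul_sq {r t : ℝ} (hr0 : 0 ≤ r) (hr2 : r ≤ 2) (ht : 2 ≤ t) :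
    r ^ t ≤ 2 ^ (t - 2) * r ^ 2 := by
  rcases hr0.eq_or_lt with rfl | hr
  · rw [zero_rpow (by linarith)]; positivity
  calc r ^ t = r ^ (t - 2) * r ^ 2 := by
        rw [← rpow_natCast, ← rpow_add hr]; norm_num
    _ ≤ 2 ^ (t - 2) * r ^ 2 := by gcongr

theorem one_sub_mul_sq_div_le_Vpair (hs : s ≤ -2) {r : ℝ} (hr0 : 0 ≤ r) (hr2 : r ≤ 2) :
    (1 - 2 ^ (-s - 2) * r ^ 2) / -s ≤ Vpair s r := by
  rw [Vpair_of_ne_zero (by linarith), div_neg, ← neg_div, neg_sub]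
  exact div_le_div_of_nonpos_of_le (by linarith)
    (by linarith [rpow_le_two_rpow_sub_two_mul_sq hr0 hr2 (show 2 ≤ -s by linarith)])

end Vpair

theorem avgE_eq (s : ℝ) (N : ℕ) (q : Fin N → EuclideanSpace ℝ (Fin 3)) :
    avgE s N q = (∑ i, ∑ j, Vpair s ‖q i - q j‖ - N * Vpair s 0) / (N * (N - 1)) := by
  rw [avgE, sum_sum_ite_lt_of_symm _ fun i j => by rw [norm_sub_rev]]
  simp only [sub_self, norm_zero, sum_const, card_univ, Fintype.card_fin, nsmul_eq_mul]
  ring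

theorem continuous_avgE {s : ℝ} (hs : s < 0) (N : ℕ) : Continuous (avgE s N) := by
  have := continuous_Vpair hs
  simp only [funext (avgE_eq s N)]
  fun_prop

noncomputable def antipodalEnergy (s : ℝ) (N : ℕ) : ℝ :=
  (1 / s) * (((2 : ℝ) ^ (-s - 1) - 1) * N + 1) / ((N : ℝ) - 1)

theorem antipodalEnergy_le_avgE {s : ℝ} (hs : s ≤ -2) {N : ℕ} (hN : 2 ≤ N)
    (q : Fin N → EuclideanSpace ℝ (Fin 3)) (hq : ∀ i, ‖q i‖ = 1) :
    antipodalEnergy s N ≤ avgE s N q := by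
  have hN' : (2 : ℝ) ≤ N := by exact_mod_cast hN
  set X : ℝ := 2 ^ (-s - 2)
  have hdist : ∀ i j, ‖q i - q j‖ ≤ 2 := fun i j =>
    (norm_sub_le _ _).trans_eq (by rw [hq, hq]; norm_num)
  have hsq : ∑ i, ∑ j, ‖q i - q j‖ ^ 2 ≤ 2 * N ^ 2 := by
    rw [sum_sum_norm_sub_sq]
    simp only [hq, Fintype.card_fin, one_pow, sum_const, card_univ, nsmul_eq_mul]
    nlinarith [sq_nonneg ‖∑ i, q i‖]
  have hpairs : (N ^ 2 - X * (2 * N ^ 2)) / -s ≤ ∑ i, ∑ j, Vpair s ‖q i - q j‖ :=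
    calc (N ^ 2 - X * (2 * N ^ 2)) / -s ≤ ∑ i, ∑ j, (1 - X * ‖q i - q j‖ ^ 2) / -s := by
          simp only [← sum_div, sum_sub_distrib, ← mul_sum, sum_const, card_univ,
            Fintype.card_fin, nsmul_eq_mul]
          gcongr
          · linarith
          · exact (sq _).trans_le (by rw [mul_one])
      _ ≤ ∑ i, ∑ j, Vpair s ‖q i - q j‖ := by
          gcongr with i _ j _
          exact one_sub_mul_sq_div_le_Vpair hs (norm_nonneg _) (hdist i j)
  have hV0 : Vpair s 0 = 1 / -s := by
    rw [Vpair_of_ne_zero (by linarith), zero_rpow (by linarith)]; ring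
  have h2X : (2 : ℝ) ^ (-s - 1) = 2 * X := by
    rw [show -s - 1 = 1 + (-s - 2) by ring, rpow_add two_pos, rpow_one]
  rw [avgE_eq, hV0]
  calc antipodalEnergy s N = ((N ^ 2 - X * (2 * N ^ 2)) / -s - N * (1 / -s)) / (N * (N - 1)) := by
        rw [antipodalEnergy, h2X]
        field_simp
        ring
    _ ≤ _ := by gcongr; nlinarith

noncomputable def meridianPoint (θ : ℝ) : EuclideanSpace ℝ (Fin 3) := !₂[sin θ, 0, cos θ]

theorem norm_meridianPoint (θ : ℝ) : ‖meridianPoint θ‖ = 1 := by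
  simp [meridianPoint, EuclideanSpace.norm_eq, Fin.sum_univ_three]

theorem continuous_meridianPoint : Continuous meridianPoint := by
  unfold meridianPoint
  fun_prop

noncomputable def twoArcs (M : ℕ) (δ : ℝ) : Fin (M + M) → EuclideanSpace ℝ (Fin 3) :=
  Fin.append (fun k : Fin M => meridianPoint (δ * k)) (fun k => -meridianPoint (δ * k))

theorem continuous_twoArcs (M : ℕ) : Continuous (twoArcs M) := by
  have := continuous_meridianPoint
  refine continuous_pi fun i => ?_
  refine Fin.addCases (fun k => ?_) (fun k => ?_) i <;>
    simp only [twoArcs, Fin.append_left, Fin.append_right] <;> fun_prop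

theorem injective_twoArcs {M : ℕ} {δ : ℝ} (hδ : 0 < δ) (hδM : δ * M ≤ π / 2) :
    Function.Injective (twoArcs M δ) := by
  have hmem : ∀ k : Fin M, δ * k ∈ Set.Ico 0 (π / 2) := fun k =>
    ⟨by positivity, (mul_lt_mul_of_pos_left (by exact_mod_cast k.isLt) hδ).trans_le hδM⟩
  have hpos : ∀ k : Fin M, 0 < cos (δ * k) := fun k =>
    cos_pos_of_mem_Ioo ⟨by linarith [(hmem k).1, pi_pos], (hmem k).2⟩
  have hinj : Function.Injective fun k : Fin M => cos (δ * k) := by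
    intro k l h
    have hIcc : ∀ k : Fin M, δ * k ∈ Set.Icc 0 π := fun k =>
      ⟨(hmem k).1, by linarith [(hmem k).2, pi_pos]⟩
    have := injOn_cos (hIcc k) (hIcc l) h
    exact Fin.ext (by exact_mod_cast mul_left_cancel₀ hδ.ne' this)
  have hz : ∀ θ, meridianPoint θ 2 = cos θ := fun θ => rfl
  refine Fin.append_injective_iff.2 ⟨fun k l h => hinj ?_, fun k l h => hinj ?_, fun k l h => ?_⟩
  · simpa only [hz] using congrArg (· 2) h
  · simpa only [PiLp.neg_apply, hz, neg_inj] using congrArg (· 2) h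
  · have := congrArg (· 2) h
    simp only [PiLp.neg_apply, hz] at this
    linarith [hpos k, hpos l]

theorem avgE_twoArcs_zero {s : ℝ} (hs : s ≠ 0) {M : ℕ} (hM : 0 < M) :
    avgE s (M + M) (twoArcs M 0) = antipodalEnergy s (M + M) := by
  have h2 : ‖meridianPoint 0 + meridianPoint 0‖ = 2 := by
    rw [← two_smul ℝ, norm_smul, norm_meridianPoint]; norm_num
  have hM' : (1 : ℝ) ≤ M := by exact_mod_cast hM
  rw [avgE_eq]
  simp only [twoArcs, Fin.sum_univ_add, Fin.append_left, Fin.append_right, zero_mul, sub_self,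
    sub_neg_eq_add, ← neg_add', neg_add_cancel, norm_neg, norm_zero, h2, sum_const, card_univ,
    Fintype.card_fin, nsmul_eq_mul]
  rw [antipodalEnergy, Vpair_of_ne_zero hs, Vpair_of_ne_zero hs, zero_rpow (neg_ne_zero.2 hs),
    show (2 : ℝ) ^ (-s) = 2 * 2 ^ (-s - 1) by
      rw [show -s = 1 + (-s - 1) by ring, rpow_add two_pos, rpow_one]; ring_nf]
  have : ((M + M : ℕ) : ℝ) - 1 ≠ 0 := by push_cast; linarith
  field_simp
  push_cast
  ring

theorem vmin_eq_antipodalEnergy {s : ℝ} (hs : s ≤ -2) {M : ℕ} (hM : 0 < M) :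
    vmin s (M + M) = antipodalEnergy s (M + M) := by
  set S : Set ℝ := {E : ℝ | ∃ q : Fin (M + M) → EuclideanSpace ℝ (Fin 3),
    (∀ i, ‖q i‖ = 1) ∧ Function.Injective q ∧ E = avgE s (M + M) q}
  have hlow : ∀ E ∈ S, antipodalEnergy s (M + M) ≤ E := by
    rintro _ ⟨q, hq, -, rfl⟩
    exact antipodalEnergy_le_avgE hs (by omega) q hq
  have hmem : ∀ᶠ δ in 𝓝[>] 0, avgE s (M + M) (twoArcs M δ) ∈ S := by
    have hM' : (0 : ℝ) < M := by exact_mod_cast hM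
    filter_upwards [Ioo_mem_nhdsGT (div_pos pi_pos (by positivity : (0 : ℝ) < 2 * M))] with δ hδ
    refine ⟨twoArcs M δ, fun i => ?_, injective_twoArcs hδ.1 ?_, rfl⟩
    · refine Fin.addCases (fun k => ?_) (fun k => ?_) i <;>
        simp only [twoArcs, Fin.append_left, Fin.append_right, norm_neg, norm_meridianPoint]
    · linarith [(lt_div_iff₀ (by positivity)).1 hδ.2]
  have hlim : Tendsto (fun δ => avgE s (M + M) (twoArcs M δ)) (𝓝[>] 0)
      (𝓝 (antipodalEnergy s (M + M))) := by
    rw [← avgE_twoArcs_zero (by linarith) hM]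
    exact (((continuous_avgE (by linarith) _).comp (continuous_twoArcs M)).tendsto 0).mono_left
      nhdsWithin_le_nhds
  refine le_antisymm (ge_of_tendsto hlim (hmem.mono fun δ hδ => csInf_le ⟨_, hlow⟩ hδ)) ?_
  obtain ⟨δ, hδ⟩ := hmem.exists
  exact le_csInf ⟨_, hδ⟩ hlow

theorem stmt7 (s : ℝ) (hs : s < -2) (N : ℕ) (hN : 2 ≤ N) (hNe : Even N) :
    vmin s N = (1 / s) * (((2 : ℝ) ^ (-s - 1) - 1) * (N : ℝ) + 1) / ((N : ℝ) - 1) ∧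
    vmin s N = -(1 / |s|) * (((2 : ℝ) ^ (|s| - 1) - 1) * (N : ℝ) + 1) / ((N : ℝ) - 1) := by
  obtain ⟨M, rfl⟩ := hNe
  have hmin := vmin_eq_antipodalEnergy hs.le (show 0 < M by omega)
  refine ⟨hmin, ?_⟩
  rw [hmin, antipodalEnergy, abs_of_neg (by linarith)]
  ring
end

section
/- For every integer N ≥ 2, lim_{s → ∞} ( v_s(N) + 1/s )^{-1/s} = ρ(N), where ρ(N) is the best-packing distance of N points on S². -/
/-!
With `c = 2 / (N (N - 1))` and `Σ_s(q) = Σ_{i<j} |q_i - q_j|^{-s}`, one has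
`⟨V_s⟩(q) + 1/s = (c/s) Σ_s(q)`. The sum contains the term `ϱ(q)^{-s}` and has
`N (N - 1) / 2` terms, each at most `ϱ(q)^{-s}`, so for every configuration `q` of `N`
distinct points on `S²`
`(c/s) ρ(N)^{-s} ≤ v_s(N) + 1/s ≤ ϱ(q)^{-s} / s`.
Raising to the power `-1/s` traps `(v_s(N) + 1/s)^{-1/s}` between `s^{1/s} ϱ(q)` and
`(s/c)^{1/s} ρ(N)`; both factors `(·)^{1/s}` tend to `1`, and `ϱ(q)` can be taken
arbitrarily close to `ρ(N)`.
-/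

open scoped BigOperators

/-- The separation distance of a configuration: the minimal pairwise distance. -/
noncomputable def sep (N : ℕ) (q : Fin N → EuclideanSpace ℝ (Fin 3)) : ℝ :=
  sInf { d : ℝ | ∃ i j : Fin N, i < j ∧ d = ‖q i - q j‖ }

/-- The best-packing distance `ρ(N)` of `N` points on `S²`. -/
noncomputable def bestPacking (N : ℕ) : ℝ :=
  sSup { d : ℝ | ∃ q : Fin N → EuclideanSpace ℝ (Fin 3),
    (∀ i, ‖q i‖ = 1) ∧ Function.Injective q ∧ d = sep N q }

open Filter Topology

theorem sum_sum_ite_lt_const {α : Type*} [Fintype α] [LinearOrder α] (c : ℝ) :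
    (∑ i : α, ∑ j : α, if i < j then c else 0) =
      (Fintype.card α : ℝ) * (Fintype.card α - 1) / 2 * c := by
  have hsplit : ∀ i j : α,
      ((if i < j then c else 0) + (if j < i then c else 0)) + (if i = j then c else 0) = c := by
    intro i j
    rcases lt_trichotomy i j with h | rfl | h
    · simp [h, h.asymm, h.ne]
    · simp
    · simp [h, h.asymm, h.ne']
  have hswap : (∑ i : α, ∑ j : α, if j < i then c else 0) =
      ∑ i : α, ∑ j : α, if i < j then c else 0 := Finset.sum_comm
  have htotal := congrArg (fun f : α → α → ℝ => ∑ i, ∑ j, f i j) (funext₂ hsplit)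
  simp only [Finset.sum_add_distrib, hswap, Finset.sum_ite_eq, Finset.mem_univ, if_true,
    Finset.sum_const, Finset.card_univ, nsmul_eq_mul] at htotal
  linarith

theorem two_div_mul_sub_one_pos {N : ℕ} (hN : 2 ≤ N) : 0 < 2 / ((N : ℝ) * (N - 1)) := by
  have : (2 : ℝ) ≤ N := by exact_mod_cast hN
  have : 0 < (N : ℝ) - 1 := by linarith
  positivity

noncomputable def rieszSum (s : ℝ) (N : ℕ) (q : Fin N → EuclideanSpace ℝ (Fin 3)) : ℝ :=
  ∑ i : Fin N, ∑ j : Fin N, if i < j then ‖q i - q j‖ ^ (-s) else 0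

theorem avgE_add_one_div {s : ℝ} (hs : s ≠ 0) {N : ℕ} (hN : 2 ≤ N)
    (q : Fin N → EuclideanSpace ℝ (Fin 3)) :
    avgE s N q + 1 / s = 2 / ((N : ℝ) * (N - 1)) / s * rieszSum s N q := by
  have hN' : (2 : ℝ) ≤ N := by exact_mod_cast hN
  have hterm : ∀ i j : Fin N, (if i < j then Vpair s ‖q i - q j‖ else 0) =
      ((if i < j then ‖q i - q j‖ ^ (-s) else 0) - (if i < j then 1 else 0)) / s := by
    intro i j
    split_ifs <;> simp [Vpair, hs]
  simp only [avgE, rieszSum, hterm, ← Finset.sum_div, Finset.sum_sub_distrib,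
    sum_sum_ite_lt_const, Fintype.card_fin]
  have : (N : ℝ) - 1 ≠ 0 := by linarith
  field_simp
  ring

section separation

variable {N : ℕ} (q : Fin N → EuclideanSpace ℝ (Fin 3))

theorem finite_setOf_norm_sub :
    {d : ℝ | ∃ i j : Fin N, i < j ∧ d = ‖q i - q j‖}.Finite :=
  (Set.finite_range fun p : Fin N × Fin N => ‖q p.1 - q p.2‖).subset
    (by rintro _ ⟨i, j, -, rfl⟩; exact ⟨(i, j), rfl⟩)

theorem sep_le_norm_sub {i j : Fin N} (hij : i < j) : sep N q ≤ ‖q i - q j‖ :=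
  csInf_le (finite_setOf_norm_sub q).bddBelow ⟨i, j, hij, rfl⟩

theorem exists_sep_eq_norm_sub (hN : 2 ≤ N) :
    ∃ i j : Fin N, i < j ∧ sep N q = ‖q i - q j‖ :=
  Set.Nonempty.csInf_mem (s := {d : ℝ | ∃ i j : Fin N, i < j ∧ d = ‖q i - q j‖})
    ⟨_, ⟨0, by omega⟩, ⟨1, by omega⟩, Fin.mk_lt_mk.2 one_pos, rfl⟩
    (finite_setOf_norm_sub q)

theorem sep_pos (hN : 2 ≤ N) (hq : Function.Injective q) : 0 < sep N q := by
  obtain ⟨i, j, hij, h⟩ := exists_sep_eq_norm_sub q hN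
  rw [h, norm_sub_pos_iff]
  exact hq.ne hij.ne

theorem sep_le_two (hN : 2 ≤ N) (hq : ∀ i, ‖q i‖ = 1) : sep N q ≤ 2 :=
  calc sep N q ≤ ‖q ⟨0, by omega⟩ - q ⟨1, by omega⟩‖ :=
        sep_le_norm_sub q (Fin.mk_lt_mk.2 one_pos)
    _ ≤ ‖q ⟨0, by omega⟩‖ + ‖q ⟨1, by omega⟩‖ := norm_sub_le _ _
    _ = 2 := by rw [hq, hq]; norm_num

theorem sep_rpow_neg_le_rieszSum (hN : 2 ≤ N) (s : ℝ) : sep N q ^ (-s) ≤ rieszSum s N q := by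
  obtain ⟨i, j, hij, h⟩ := exists_sep_eq_norm_sub q hN
  have hnonneg : ∀ i j : Fin N, 0 ≤ if i < j then ‖q i - q j‖ ^ (-s) else 0 := by
    intro i j; split_ifs <;> positivity
  calc sep N q ^ (-s) = if i < j then ‖q i - q j‖ ^ (-s) else 0 := by rw [if_pos hij, h]
    _ ≤ ∑ j' : Fin N, if i < j' then ‖q i - q j'‖ ^ (-s) else 0 :=
      Finset.single_le_sum (fun j' _ => hnonneg i j') (Finset.mem_univ j)
    _ ≤ rieszSum s N q :=
      Finset.single_le_sum (f := fun i' => ∑ j' : Fin N, _)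
        (fun i' _ => Finset.sum_nonneg fun j' _ => hnonneg i' j') (Finset.mem_univ i)

theorem rieszSum_le_sep_rpow_neg {s : ℝ} (hs : 0 ≤ s) (hsep : 0 < sep N q) :
    rieszSum s N q ≤ (N : ℝ) * (N - 1) / 2 * sep N q ^ (-s) := by
  have hpairs := sum_sum_ite_lt_const (α := Fin N) (sep N q ^ (-s))
  rw [Fintype.card_fin] at hpairs
  rw [← hpairs]
  refine Finset.sum_le_sum fun i _ => Finset.sum_le_sum fun j _ => ?_
  split_ifs with hij
  · exact Real.rpow_le_rpow_of_nonpos hsep (sep_le_norm_sub q hij) (neg_nonpos.2 hs)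
  · exact le_rfl

end separation

theorem exists_injective_unit_sphere (N : ℕ) :
    ∃ q : Fin N → EuclideanSpace ℝ (Fin 3),
      (∀ i, ‖q i‖ = 1) ∧ Function.Injective q := by
  set S := Metric.sphere (0 : EuclideanSpace ℝ (Fin 3)) 1
  have hrank : 1 < Module.rank ℝ (EuclideanSpace ℝ (Fin 3)) := by
    rw [← Module.finrank_eq_rank, finrank_euclideanSpace_fin]; norm_num
  have hS : S.Infinite :=
    (isConnected_sphere hrank 0 zero_le_one).isPreconnected.infinite_of_nontrivial
      ⟨EuclideanSpace.single 0 1, by simp, EuclideanSpace.single 1 1, by simp,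
        fun h => by simpa using congrArg (· 0) h⟩
  let e := hS.natEmbedding
  refine ⟨fun i => e i, fun i => mem_sphere_zero_iff_norm.1 (e i).2, fun i j h => Fin.ext ?_⟩
  exact e.injective (Subtype.ext h)

theorem sep_le_bestPacking {N : ℕ} (hN : 2 ≤ N) {q : Fin N → EuclideanSpace ℝ (Fin 3)}
    (hq : ∀ i, ‖q i‖ = 1) (hinj : Function.Injective q) : sep N q ≤ bestPacking N :=
  le_csSup ⟨2, by rintro _ ⟨q, hq, -, rfl⟩; exact sep_le_two q hN hq⟩ ⟨q, hq, hinj, rfl⟩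

theorem bestPacking_pos {N : ℕ} (hN : 2 ≤ N) : 0 < bestPacking N := by
  obtain ⟨q, hq, hinj⟩ := exists_injective_unit_sphere N
  exact (sep_pos q hN hinj).trans_le (sep_le_bestPacking hN hq hinj)

theorem le_avgE_add_one_div {s : ℝ} (hs : 0 < s) {N : ℕ} (hN : 2 ≤ N)
    {q : Fin N → EuclideanSpace ℝ (Fin 3)} (hq : ∀ i, ‖q i‖ = 1)
    (hinj : Function.Injective q) :
    2 / ((N : ℝ) * (N - 1)) / s * bestPacking N ^ (-s) ≤ avgE s N q + 1 / s := by
  have := two_div_mul_sub_one_pos hN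
  rw [avgE_add_one_div hs.ne' hN]
  refine mul_le_mul_of_nonneg_left (le_trans ?_ (sep_rpow_neg_le_rieszSum q hN s)) (by positivity)
  exact Real.rpow_le_rpow_of_nonpos (sep_pos q hN hinj) (sep_le_bestPacking hN hq hinj)
    (neg_nonpos.2 hs.le)

theorem le_vmin_add_one_div {s : ℝ} (hs : 0 < s) {N : ℕ} (hN : 2 ≤ N) :
    2 / ((N : ℝ) * (N - 1)) / s * bestPacking N ^ (-s) ≤ vmin s N + 1 / s := by
  obtain ⟨q₀, hq₀, hinj₀⟩ := exists_injective_unit_sphere N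
  rw [← sub_le_iff_le_add]
  refine le_csInf ⟨_, q₀, hq₀, hinj₀, rfl⟩ ?_
  rintro _ ⟨q, hq, hinj, rfl⟩
  rw [sub_le_iff_le_add]
  exact le_avgE_add_one_div hs hN hq hinj

theorem vmin_add_one_div_le {s : ℝ} (hs : 0 < s) {N : ℕ} (hN : 2 ≤ N)
    {q : Fin N → EuclideanSpace ℝ (Fin 3)} (hq : ∀ i, ‖q i‖ = 1)
    (hinj : Function.Injective q) :
    vmin s N + 1 / s ≤ 1 / s * sep N q ^ (-s) := by
  have := two_div_mul_sub_one_pos hN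
  have hbdd : BddBelow {E : ℝ | ∃ q : Fin N → EuclideanSpace ℝ (Fin 3),
      (∀ i, ‖q i‖ = 1) ∧ Function.Injective q ∧ E = avgE s N q} := by
    refine ⟨2 / ((N : ℝ) * (N - 1)) / s * bestPacking N ^ (-s) - 1 / s, ?_⟩
    rintro _ ⟨q, hq, hinj, rfl⟩
    linarith [le_avgE_add_one_div hs hN hq hinj]
  calc vmin s N + 1 / s ≤ avgE s N q + 1 / s := by
        gcongr; exact csInf_le hbdd ⟨q, hq, hinj, rfl⟩
    _ = 2 / ((N : ℝ) * (N - 1)) / s * rieszSum s N q := avgE_add_one_div hs.ne' hN q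
    _ ≤ 2 / ((N : ℝ) * (N - 1)) / s * ((N : ℝ) * (N - 1) / 2 * sep N q ^ (-s)) := by
        gcongr; exact rieszSum_le_sep_rpow_neg q hs.le (sep_pos q hN hinj)
    _ = 1 / s * sep N q ^ (-s) := by
        have hN1 : (1 : ℝ) < N := by exact_mod_cast hN
        field_simp [sub_ne_zero.2 hN1.ne']

theorem div_mul_rpow_neg_rpow_neg_one_div {c s x : ℝ} (hc : 0 < c) (hs : 0 < s) (hx : 0 ≤ x) :
    (c / s * x ^ (-s)) ^ (-(1 / s)) = (s / c) ^ (1 / s) * x := by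
  rw [Real.mul_rpow (by positivity) (by positivity), Real.rpow_neg (by positivity) (1 / s),
    ← Real.inv_rpow (by positivity), inv_div, ← Real.rpow_mul hx, neg_mul_neg,
    mul_one_div_cancel hs.ne', Real.rpow_one]

theorem tendsto_div_const_rpow_one_div {c : ℝ} (hc : 0 < c) :
    Tendsto (fun s : ℝ => (s / c) ^ (1 / s)) atTop (𝓝 1) := by
  have hconst : Tendsto (fun s : ℝ => c⁻¹ ^ (1 / s)) atTop (𝓝 1) := by
    simpa [Function.comp_def] using
      (Real.continuousAt_const_rpow (inv_ne_zero hc.ne')).tendsto.comp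
        (tendsto_const_nhds.div_atTop tendsto_id : Tendsto (fun s : ℝ => 1 / s) atTop (𝓝 0))
  refine Tendsto.congr' ?_ (by simpa using tendsto_rpow_div.mul hconst :
    Tendsto (fun s : ℝ => s ^ (1 / s) * c⁻¹ ^ (1 / s)) atTop (𝓝 1))
  filter_upwards [eventually_ge_atTop 0] with s hs
  rw [← Real.mul_rpow hs (inv_nonneg.2 hc.le), div_eq_mul_inv s c]

theorem rpow_mul_sep_le_vmin_add_one_div_rpow {s : ℝ} (hs : 0 < s) {N : ℕ} (hN : 2 ≤ N)
    {q : Fin N → EuclideanSpace ℝ (Fin 3)} (hq : ∀ i, ‖q i‖ = 1)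
    (hinj : Function.Injective q) :
    s ^ (1 / s) * sep N q ≤ (vmin s N + 1 / s) ^ (-(1 / s)) := by
  have hpos : 0 < vmin s N + 1 / s := by
    have := bestPacking_pos hN
    have := two_div_mul_sub_one_pos hN
    exact lt_of_lt_of_le (by positivity) (le_vmin_add_one_div hs hN)
  calc s ^ (1 / s) * sep N q = (1 / s * sep N q ^ (-s)) ^ (-(1 / s)) := by
        rw [div_mul_rpow_neg_rpow_neg_one_div one_pos hs (sep_pos q hN hinj).le, div_one]
    _ ≤ (vmin s N + 1 / s) ^ (-(1 / s)) :=
        Real.rpow_le_rpow_of_nonpos hpos (vmin_add_one_div_le hs hN hq hinj)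
          (neg_nonpos.2 (by positivity))

theorem vmin_add_one_div_rpow_le {s : ℝ} (hs : 0 < s) {N : ℕ} (hN : 2 ≤ N) :
    (vmin s N + 1 / s) ^ (-(1 / s)) ≤
      (s / (2 / ((N : ℝ) * (N - 1)))) ^ (1 / s) * bestPacking N := by
  have := two_div_mul_sub_one_pos hN
  have hρ := bestPacking_pos hN
  calc (vmin s N + 1 / s) ^ (-(1 / s))
      ≤ (2 / ((N : ℝ) * (N - 1)) / s * bestPacking N ^ (-s)) ^ (-(1 / s)) :=
        Real.rpow_le_rpow_of_nonpos (by positivity) (le_vmin_add_one_div hs hN)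
          (neg_nonpos.2 (by positivity))
    _ = (s / (2 / ((N : ℝ) * (N - 1)))) ^ (1 / s) * bestPacking N :=
        div_mul_rpow_neg_rpow_neg_one_div (by positivity) hs hρ.le

theorem stmt12 (N : ℕ) (hN : 2 ≤ N) :
    Filter.Tendsto (fun s : ℝ => (vmin s N + 1 / s) ^ (-(1 / s)))
      Filter.atTop (nhds (bestPacking N)) := by
  refine tendsto_order.2 ⟨fun a ha => ?_, fun b hb => ?_⟩
  · obtain ⟨q₀, hq₀, hinj₀⟩ := exists_injective_unit_sphere N
    obtain ⟨_, ⟨q, hq, hinj, rfl⟩, hsep⟩ :=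
      exists_lt_of_lt_csSup (by exact ⟨_, q₀, hq₀, hinj₀, rfl⟩) ha
    have hlim := tendsto_rpow_div.mul_const (sep N q)
    rw [one_mul] at hlim
    filter_upwards [hlim.eventually_const_lt hsep, eventually_gt_atTop 0] with s hlt hs
    exact hlt.trans_le (rpow_mul_sep_le_vmin_add_one_div_rpow hs hN hq hinj)
  · have hlim :=
      (tendsto_div_const_rpow_one_div (two_div_mul_sub_one_pos hN)).mul_const (bestPacking N)
    rw [one_mul] at hlim
    filter_upwards [hlim.eventually_lt_const hb, eventually_gt_atTop 0] with s hlt hs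
    exact (vmin_add_one_div_rpow_le hs hN).trans_lt hlt
end

section
/- For every real s with -2 < s and s ≠ 0, the quantity (1/s)·( (3/8)^{s/2} - (2/5)·(1/2)^{s/2} - (3/5)·(1/3)^{s/2} ) is strictly negative; moreover its limit as s → 0 equals (1/10)·log(3⁸/2¹³), which is also strictly negative. -/
/-!
Write `p = s / 2`. Dividing by `(3/8)^p`, the bracket equals `(3/8)^p (1 - φ p)` with
`φ p = (2/5)(4/3)^p + (3/5)(8/9)^p`, a convex function of `p` with `φ 0 = 1` and `φ (-1) = 39/40`.
By convexity the secant slope `(φ p - 1) / p` is increasing in `p`, so for `p > -1` it is at least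
its value `1/40` at `p = -1`; hence the whole quantity is at most `-(3/8)^p / 80 < 0`.
Since the bracket vanishes at `s = 0`, the limit there is its derivative at `0`.
-/

open Real Filter Set Topology

noncomputable def bipyramidRatio (p : ℝ) : ℝ :=
  2 / 5 * (4 / 3 : ℝ) ^ p + 3 / 5 * (8 / 9 : ℝ) ^ p

theorem convexOn_bipyramidRatio : ConvexOn ℝ univ bipyramidRatio :=
  ((convexOn_rpow_left (by norm_num)).smul (by norm_num)).add
    ((convexOn_rpow_left (by norm_num)).smul (by norm_num))

theorem bipyramidRatio_zero : bipyramidRatio 0 = 1 := by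
  norm_num [bipyramidRatio]

theorem bipyramidRatio_neg_one : bipyramidRatio (-1) = 39 / 40 := by
  norm_num [bipyramidRatio, rpow_neg_one]

theorem one_fortieth_le_bipyramidRatio_secant {p : ℝ} (hp : -1 < p) (hp0 : p ≠ 0) :
    1 / 40 ≤ (bipyramidRatio p - 1) / p := by
  have h := convexOn_bipyramidRatio.secant_mono (a := 0) (x := -1) (y := p) (mem_univ _)
    (mem_univ _) (mem_univ _) (by norm_num) hp0 hp.le
  rw [bipyramidRatio_zero, bipyramidRatio_neg_one, sub_zero, sub_zero] at h
  exact h.trans_eq' (by norm_num)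

theorem bipyramid_gap_eq (p : ℝ) :
    (3 / 8 : ℝ) ^ p - 2 / 5 * (1 / 2 : ℝ) ^ p - 3 / 5 * (1 / 3 : ℝ) ^ p
      = (3 / 8 : ℝ) ^ p * (1 - bipyramidRatio p) := by
  have h₂ : (1 / 2 : ℝ) ^ p = (3 / 8 : ℝ) ^ p * (4 / 3 : ℝ) ^ p := by
    rw [← mul_rpow (by norm_num) (by norm_num)]; norm_num
  have h₃ : (1 / 3 : ℝ) ^ p = (3 / 8 : ℝ) ^ p * (8 / 9 : ℝ) ^ p := by
    rw [← mul_rpow (by norm_num) (by norm_num)]; norm_num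
  rw [h₂, h₃, bipyramidRatio]
  ring

theorem bipyramid_energy_secant_neg {s : ℝ} (hs : -2 < s) (hs0 : s ≠ 0) :
    1 / s * ((3 / 8 : ℝ) ^ (s / 2) - 2 / 5 * (1 / 2 : ℝ) ^ (s / 2)
      - 3 / 5 * (1 / 3 : ℝ) ^ (s / 2)) < 0 := by
  have hslope := one_fortieth_le_bipyramidRatio_secant (p := s / 2) (by linarith) (by simpa)
  have hpos : 0 < (3 / 8 : ℝ) ^ (s / 2) := rpow_pos_of_pos (by norm_num) _
  have hrw : 1 / s * ((3 / 8 : ℝ) ^ (s / 2) * (1 - bipyramidRatio (s / 2)))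
      = -((3 / 8 : ℝ) ^ (s / 2) / 2) * ((bipyramidRatio (s / 2) - 1) / (s / 2)) := by
    field_simp
    ring
  rw [bipyramid_gap_eq, hrw]
  exact mul_neg_of_neg_of_pos (by linarith) (by linarith)

theorem hasDerivAt_bipyramid_gap :
    HasDerivAt (fun s : ℝ => (3 / 8 : ℝ) ^ (s / 2) - 2 / 5 * (1 / 2 : ℝ) ^ (s / 2)
      - 3 / 5 * (1 / 3 : ℝ) ^ (s / 2)) (1 / 10 * log ((3 ^ 8 : ℝ) / (2 ^ 13 : ℝ))) 0 := by
  have hhalf : HasDerivAt (fun s : ℝ => s / 2) (1 / 2) 0 := (hasDerivAt_id 0).div_const 2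
  have h := ((hhalf.const_rpow (a := 3 / 8) (by norm_num)).sub
    ((hhalf.const_rpow (a := 1 / 2) (by norm_num)).const_mul (2 / 5))).sub
    ((hhalf.const_rpow (a := 1 / 3) (by norm_num)).const_mul (3 / 5))
  refine h.congr_deriv ?_
  have l₈ : log (3 / 8 : ℝ) = log 3 - 3 * log 2 := by
    rw [log_div (by norm_num) (by norm_num), show (8 : ℝ) = 2 ^ 3 by norm_num, log_pow]
    push_cast; ring
  have l₂ : log (1 / 2 : ℝ) = -log 2 := by rw [one_div, log_inv]
  have l₃ : log (1 / 3 : ℝ) = -log 3 := by rw [one_div, log_inv]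
  rw [l₈, l₂, l₃, log_div (by positivity) (by positivity), log_pow, log_pow]
  simp only [zero_div, rpow_zero, mul_one]
  push_cast
  ring

theorem stmt19 :
    (∀ s : ℝ, -2 < s → s ≠ 0 →
      (1 / s) * ((3 / 8 : ℝ) ^ (s / 2) - (2 / 5) * (1 / 2 : ℝ) ^ (s / 2)
        - (3 / 5) * (1 / 3 : ℝ) ^ (s / 2)) < 0) ∧
    Filter.Tendsto (fun s : ℝ =>
        (1 / s) * ((3 / 8 : ℝ) ^ (s / 2) - (2 / 5) * (1 / 2 : ℝ) ^ (s / 2)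
          - (3 / 5) * (1 / 3 : ℝ) ^ (s / 2)))
      (nhdsWithin 0 {0}ᶜ) (nhds ((1 / 10) * Real.log ((3 ^ 8 : ℝ) / (2 ^ 13 : ℝ)))) ∧
    (1 / 10 : ℝ) * Real.log ((3 ^ 8 : ℝ) / (2 ^ 13 : ℝ)) < 0 := by
  refine ⟨fun _ => bipyramid_energy_secant_neg, ?_, ?_⟩
  · refine hasDerivAt_bipyramid_gap.tendsto_slope_zero.congr fun s => ?_
    simp only [zero_add, zero_div, rpow_zero, smul_eq_mul]
    ring
  · have : log ((3 ^ 8 : ℝ) / (2 ^ 13 : ℝ)) < 0 := log_neg (by norm_num) (by norm_num)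
    linarith
end
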